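/- arXiv:2509.18811 — 2 statements merged into one kernel-verified Lean document; each statement's English description precedes it below -/
import Mathlib

section
/- Tweedie's formula: if the conditional density of the noisy variable satisfies p(x_t | x) = N(x_t; α x, σ² I) for α ∈ ℝ, σ > 0, then the score of the marginal density satisfies ∇_{x_t} log p(x_t) = σ⁻² (α·E[x | x_t] − x_t). -/
/-!
Differentiating the Gaussian kernel in its second argument gives
`∇_z N(z; α x, σ² I) = σ⁻² (α x - z) N(z; α x, σ² I)`, so the gradient of the marginal,
`∫ p(x) ∇_z N(z; α x, σ² I) dx`, equals `σ⁻² (α ∫ x N p dx - z p_t(z))`.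
Dividing by `p_t(z)`, as the chain rule for `log` does, turns the first integral into the
posterior mean.
-/

open Real MeasureTheory

/-- The Gaussian noising kernel `p(x_t = z | x) = N(z; α x, σ² I)` on `ℝⁿ`. -/
noncomputable def gaussKernel (n : ℕ) (α σ : ℝ) (x z : EuclideanSpace ℝ (Fin n)) : ℝ :=
  (2 * π * σ ^ 2) ^ (-(n : ℝ) / 2) * Real.exp (-‖z - α • x‖ ^ 2 / (2 * σ ^ 2))


section Gradient

variable {F : Type*} [NormedAddCommGroup F] [InnerProductSpace ℝ F] [CompleteSpace F]

theorem HasDerivAt.comp_hasGradientAt {g : ℝ → ℝ} {g' : ℝ} {f : F → ℝ} {f' x : F}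
    (hg : HasDerivAt g g' (f x)) (hf : HasGradientAt f f' x) :
    HasGradientAt (g ∘ f) (g' • f') x := by
  rw [hasGradientAt_iff_hasFDerivAt, map_smul]
  exact hg.comp_hasFDerivAt x hf.hasFDerivAt

theorem HasGradientAt.log {f : F → ℝ} {f' x : F} (hf : HasGradientAt f f' x) (hx : f x ≠ 0) :
    HasGradientAt (fun y => Real.log (f y)) ((f x)⁻¹ • f') x :=
  (hasDerivAt_log hx).comp_hasGradientAt hf

theorem hasGradientAt_norm_sub_sq (a x : F) :
    HasGradientAt (fun w => ‖w - a‖ ^ 2) ((2 : ℝ) • (x - a)) x := by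
  rw [hasGradientAt_iff_hasFDerivAt, map_smul]
  refine ((hasFDerivAt_id x).sub_const a).norm_sq.congr_fderiv ?_
  ext v
  simp [two_smul]

end Gradient

theorem hasGradientAt_gaussKernel (n : ℕ) (α σ : ℝ) (x z : EuclideanSpace ℝ (Fin n)) :
    HasGradientAt (gaussKernel n α σ x)
      ((σ ^ 2)⁻¹ • gaussKernel n α σ x z • (α • x - z)) z := by
  have h := (((hasDerivAt_id _).div_const (2 * σ ^ 2)).neg.exp.const_mul
    ((2 * π * σ ^ 2) ^ (-(n : ℝ) / 2))).comp_hasGradientAt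
    (hasGradientAt_norm_sub_sq (α • x) z)
  convert h using 1
  · ext w
    simp [gaussKernel, neg_div]
  · simp only [gaussKernel, Pi.neg_apply, id, neg_div, one_div]
    module

theorem integral_smul_gradient_gaussKernel (n : ℕ) (α σ : ℝ)
    {μ : Measure (EuclideanSpace ℝ (Fin n))} (p : EuclideanSpace ℝ (Fin n) → ℝ)
    (z : EuclideanSpace ℝ (Fin n))
    (hint1 : Integrable (fun x => gaussKernel n α σ x z * p x) μ)
    (hint2 : Integrable (fun x => (gaussKernel n α σ x z * p x) • x) μ) :
    ∫ x, p x • gradient (gaussKernel n α σ x) z ∂μ =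
      (σ ^ 2)⁻¹ • (α • ∫ x, (gaussKernel n α σ x z * p x) • x ∂μ -
        (∫ x, gaussKernel n α σ x z * p x ∂μ) • z) := by
  have hpointwise : ∀ x, p x • gradient (gaussKernel n α σ x) z =
      (σ ^ 2)⁻¹ • (α • (gaussKernel n α σ x z * p x) • x -
        (gaussKernel n α σ x z * p x) • z) := fun x => by
    rw [(hasGradientAt_gaussKernel n α σ x z).gradient]
    module
  have hint2' : Integrable (fun x => α • (gaussKernel n α σ x z * p x) • x) μ := hint2.smul α
  simp_rw [hpointwise]
  rw [integral_smul, integral_sub hint2' (hint1.smul_const z), integral_smul,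
    integral_smul_const]

theorem tweedie_formula_general (n : ℕ) (α σ : ℝ)
    (p : EuclideanSpace ℝ (Fin n) → ℝ)
    (pt : EuclideanSpace ℝ (Fin n) → ℝ)
    (hpt : ∀ z, pt z = ∫ x, gaussKernel n α σ x z * p x)
    (hpt_pos : ∀ z, 0 < pt z)
    (hint1 : ∀ z, Integrable fun x => gaussKernel n α σ x z * p x)
    (hint2 : ∀ z, Integrable fun x => (gaussKernel n α σ x z * p x) • x)
    (hgrad : ∀ z, HasGradientAt pt
      (∫ x, p x • gradient (fun w => gaussKernel n α σ x w) z) z)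
    (xt : EuclideanSpace ℝ (Fin n))
    (postMean : EuclideanSpace ℝ (Fin n))
    (hmean : postMean = (pt xt)⁻¹ • ∫ x, (gaussKernel n α σ x xt * p x) • x) :
    gradient (fun z => Real.log (pt z)) xt = (σ ^ 2)⁻¹ • (α • postMean - xt) := by
  have hpt_ne : pt xt ≠ 0 := (hpt_pos xt).ne'
  rw [((hgrad xt).log hpt_ne).gradient,
    integral_smul_gradient_gaussKernel n α σ p xt (hint1 xt) (hint2 xt), ← hpt xt, hmean]
  match_scalars <;> field_simp

/-- Tweedie's formula: if `p(x_t | x) = N(x_t; α x, σ² I)` then the score of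
the marginal density satisfies `∇_{x_t} log p(x_t) = σ⁻² (α E[x | x_t] − x_t)`. The posterior
mean is `E[x | x_t] = (p(x_t))⁻¹ ∫ x N(x_t; α x, σ² I) p(x) dx`, and differentiation under
the integral sign is assumed to be valid (`hgrad`). -/
theorem tweedie_formula (n : ℕ) (α σ : ℝ) (hσ : 0 < σ)
    (p : EuclideanSpace ℝ (Fin n) → ℝ)
    (hp_pos : ∀ x, 0 < p x)
    (hp_meas : Measurable p)
    (hp_norm : ∫ x, p x = 1)
    (pt : EuclideanSpace ℝ (Fin n) → ℝ)
    (hpt : ∀ z, pt z = ∫ x, gaussKernel n α σ x z * p x)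
    (hpt_pos : ∀ z, 0 < pt z)
    (hint1 : ∀ z, Integrable fun x => gaussKernel n α σ x z * p x)
    (hint2 : ∀ z, Integrable fun x => (gaussKernel n α σ x z * p x) • x)
    (hgrad : ∀ z, HasGradientAt pt
      (∫ x, p x • gradient (fun w => gaussKernel n α σ x w) z) z)
    (xt : EuclideanSpace ℝ (Fin n))
    (postMean : EuclideanSpace ℝ (Fin n))
    (hmean : postMean = (pt xt)⁻¹ • ∫ x, (gaussKernel n α σ x xt * p x) • x) :
    gradient (fun z => Real.log (pt z)) xt = (σ ^ 2)⁻¹ • (α • postMean - xt) :=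
  tweedie_formula_general n α σ p pt hpt hpt_pos hint1 hint2 hgrad xt postMean hmean
end

section
/- Monotonicity of effective sample size in the tempering exponent: for positive weights ŵ_i, the function α ↦ N_eff(α) = (Σ ŵ_i^α)²/Σ ŵ_i^{2α} is nonincreasing on (0, ∞). -/
/-!
Cross-multiplying, one needs `(∑ w^β)² ∑ w^{2α} ≤ (∑ w^α)² ∑ w^{2β}`. Cauchy–Schwarz, splitting
`w^β = w^{α/2} w^{β-α/2}`, gives `(∑ w^β)² ≤ ∑ w^α ∑ w^{2β-α}`; and
`∑ w^{2β-α} ∑ w^{2α} ≤ ∑ w^α ∑ w^{2β}` because the exponent pair `(α, 2β)` majorizes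
`(2β-α, 2α)`, which after symmetrizing the double sum reduces to the rearrangement inequality
`(a^u - b^u)(a^v - b^v) ≥ 0` for `u, v ≥ 0`.
-/

open Finset

noncomputable def temperedESS {ι : Type*} (s : Finset ι) (w : ι → ℝ) (α : ℝ) : ℝ :=
  (∑ i ∈ s, w i ^ α) ^ 2 / ∑ i ∈ s, w i ^ (2 * α)

namespace Real

theorem rpow_mul_rpow_add_rpow_mul_rpow_le {a b u v : ℝ} (ha : 0 < a) (hb : 0 < b)
    (hu : 0 ≤ u) (hv : 0 ≤ v) :
    a ^ u * b ^ v + b ^ u * a ^ v ≤ a ^ (u + v) + b ^ (u + v) := by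
  have hsame_order : 0 ≤ (a ^ u - b ^ u) * (a ^ v - b ^ v) := by
    rcases le_total a b with h | h
    · exact mul_nonneg_of_nonpos_of_nonpos
        (sub_nonpos.2 (rpow_le_rpow ha.le h hu)) (sub_nonpos.2 (rpow_le_rpow ha.le h hv))
    · exact mul_nonneg
        (sub_nonneg.2 (rpow_le_rpow hb.le h hu)) (sub_nonneg.2 (rpow_le_rpow hb.le h hv))
  calc a ^ u * b ^ v + b ^ u * a ^ v
      = a ^ (u + v) + b ^ (u + v) - (a ^ u - b ^ u) * (a ^ v - b ^ v) := by
        rw [rpow_add ha, rpow_add hb]; ring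
    _ ≤ a ^ (u + v) + b ^ (u + v) := sub_le_self _ hsame_order

theorem rpow_mul_rpow_add_rpow_mul_rpow_le_of_add_eq {a b p q r t : ℝ} (ha : 0 < a) (hb : 0 < b)
    (hrp : r ≤ p) (hrq : r ≤ q) (hsum : p + q = r + t) :
    a ^ p * b ^ q + b ^ p * a ^ q ≤ a ^ r * b ^ t + b ^ r * a ^ t := by
  obtain ⟨u, hu, rfl⟩ : ∃ u, 0 ≤ u ∧ p = r + u := ⟨p - r, by linarith, by ring⟩
  obtain ⟨v, hv, rfl⟩ : ∃ v, 0 ≤ v ∧ q = r + v := ⟨q - r, by linarith, by ring⟩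
  obtain rfl : t = r + (u + v) := by linarith
  have hab : 0 ≤ (a * b) ^ r := rpow_nonneg (mul_pos ha hb).le r
  calc a ^ (r + u) * b ^ (r + v) + b ^ (r + u) * a ^ (r + v)
      = (a * b) ^ r * (a ^ u * b ^ v + b ^ u * a ^ v) := by
        simp only [rpow_add ha, rpow_add hb, mul_rpow ha.le hb.le]; ring
    _ ≤ (a * b) ^ r * (a ^ (u + v) + b ^ (u + v)) :=
        mul_le_mul_of_nonneg_left (rpow_mul_rpow_add_rpow_mul_rpow_le ha hb hu hv) hab
    _ = a ^ r * b ^ (r + (u + v)) + b ^ r * a ^ (r + (u + v)) := by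
        simp only [rpow_add ha, rpow_add hb, mul_rpow ha.le hb.le]; ring

end Real

namespace Finset

variable {ι : Type*} (s : Finset ι) {w : ι → ℝ}

theorem sum_rpow_mul_sum_rpow_le_of_add_eq (hw : ∀ i ∈ s, 0 < w i) {p q r t : ℝ}
    (hrp : r ≤ p) (hrq : r ≤ q) (hsum : p + q = r + t) :
    (∑ i ∈ s, w i ^ p) * ∑ i ∈ s, w i ^ q ≤ (∑ i ∈ s, w i ^ r) * ∑ i ∈ s, w i ^ t := by
  have hpairs : ∑ i ∈ s, ∑ j ∈ s, (w i ^ p * w j ^ q + w j ^ p * w i ^ q)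
      ≤ ∑ i ∈ s, ∑ j ∈ s, (w i ^ r * w j ^ t + w j ^ r * w i ^ t) :=
    sum_le_sum fun i hi ↦ sum_le_sum fun j hj ↦
      Real.rpow_mul_rpow_add_rpow_mul_rpow_le_of_add_eq (hw i hi) (hw j hj) hrp hrq hsum
  simp only [sum_add_distrib] at hpairs
  rw [sum_comm (f := fun i j ↦ w j ^ p * w i ^ q), sum_comm (f := fun i j ↦ w j ^ r * w i ^ t)]
    at hpairs
  rw [sum_mul_sum, sum_mul_sum]
  linarith

theorem sum_rpow_sq_mul_sum_rpow_two_mul_le (hw : ∀ i ∈ s, 0 < w i) {α β : ℝ}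
    (hα : 0 ≤ α) (hαβ : α ≤ β) :
    (∑ i ∈ s, w i ^ β) ^ 2 * ∑ i ∈ s, w i ^ (2 * α)
      ≤ (∑ i ∈ s, w i ^ α) ^ 2 * ∑ i ∈ s, w i ^ (2 * β) := by
  have hcauchy : (∑ i ∈ s, w i ^ β) ^ 2 ≤ (∑ i ∈ s, w i ^ α) * ∑ i ∈ s, w i ^ (2 * β - α) :=
    sum_sq_le_sum_mul_sum_of_sq_le_mul s
      (fun i hi ↦ (Real.rpow_pos_of_pos (hw i hi) α).le)
      (fun i hi ↦ (Real.rpow_pos_of_pos (hw i hi) _).le)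
      (fun i hi ↦ le_of_eq <| by rw [← Real.rpow_natCast, ← Real.rpow_mul (hw i hi).le,
        ← Real.rpow_add (hw i hi)]; ring_nf)
  have hmajorize : (∑ i ∈ s, w i ^ (2 * β - α)) * ∑ i ∈ s, w i ^ (2 * α)
      ≤ (∑ i ∈ s, w i ^ α) * ∑ i ∈ s, w i ^ (2 * β) :=
    sum_rpow_mul_sum_rpow_le_of_add_eq s hw (by linarith) (by linarith) (by ring)
  have hα_nonneg : 0 ≤ ∑ i ∈ s, w i ^ α :=
    sum_nonneg fun i hi ↦ (Real.rpow_pos_of_pos (hw i hi) α).le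
  have h2α_nonneg : 0 ≤ ∑ i ∈ s, w i ^ (2 * α) :=
    sum_nonneg fun i hi ↦ (Real.rpow_pos_of_pos (hw i hi) _).le
  calc (∑ i ∈ s, w i ^ β) ^ 2 * ∑ i ∈ s, w i ^ (2 * α)
      ≤ (∑ i ∈ s, w i ^ α) * ((∑ i ∈ s, w i ^ (2 * β - α)) * ∑ i ∈ s, w i ^ (2 * α)) := by
        rw [← mul_assoc]; exact mul_le_mul_of_nonneg_right hcauchy h2α_nonneg
    _ ≤ (∑ i ∈ s, w i ^ α) * ((∑ i ∈ s, w i ^ α) * ∑ i ∈ s, w i ^ (2 * β)) :=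
        mul_le_mul_of_nonneg_left hmajorize hα_nonneg
    _ = (∑ i ∈ s, w i ^ α) ^ 2 * ∑ i ∈ s, w i ^ (2 * β) := by ring

end Finset

theorem temperedESS_antitoneOn {ι : Type*} (s : Finset ι) {w : ι → ℝ} (hw : ∀ i ∈ s, 0 < w i) :
    AntitoneOn (temperedESS s w) (Set.Ici 0) := by
  intro α hα β _ hαβ
  rcases s.eq_empty_or_nonempty with rfl | hs
  · simp [temperedESS]
  have hsum_pos (γ : ℝ) : 0 < ∑ i ∈ s, w i ^ γ :=
    sum_pos (fun i hi ↦ Real.rpow_pos_of_pos (hw i hi) γ) hs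
  rw [temperedESS, temperedESS, div_le_div_iff₀ (hsum_pos _) (hsum_pos _)]
  exact s.sum_rpow_sq_mul_sum_rpow_two_mul_le hw hα hαβ

theorem tempered_ess_antitone_general (N : ℕ)
    (w : Fin N → ℝ) (hw : ∀ i, 0 < w i) :
    ∀ α β : ℝ, 0 < α → α ≤ β →
      (∑ i, w i ^ β) ^ 2 / ∑ i, w i ^ (2 * β)
        ≤ (∑ i, w i ^ α) ^ 2 / ∑ i, w i ^ (2 * α) :=
  fun _ _ hα hαβ ↦
    temperedESS_antitoneOn univ (fun i _ ↦ hw i) hα.le (hα.le.trans hαβ) hαβ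

/-- monotonicity of effective sample size in the tempering exponent: for
positive weights `ŵ_i`, the function `α ↦ N_eff(α) = (∑ ŵ_i^α)² / ∑ ŵ_i^{2α}` is
nonincreasing on `(0, ∞)`: for `0 < α ≤ β`,
`(∑ ŵ_i^β)² / ∑ ŵ_i^{2β} ≤ (∑ ŵ_i^α)² / ∑ ŵ_i^{2α}`. -/
theorem tempered_ess_antitone (N : ℕ) (hN : 1 ≤ N)
    (w : Fin N → ℝ) (hw : ∀ i, 0 < w i) :
    ∀ α β : ℝ, 0 < α → α ≤ β →
      (∑ i, w i ^ β) ^ 2 / ∑ i, w i ^ (2 * β)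
        ≤ (∑ i, w i ^ α) ^ 2 / ∑ i, w i ^ (2 * α) :=
  tempered_ess_antitone_general N w hw
end
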